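/- The family of behaviors of deterministic splitters is a proper subfamily of the family of behaviors of spliffers: over the alphabet A = {a,b} (a ≠ b), the finite set {(aa, b, aba), (a, ab, aba)} ⊆ U is the behavior of some spliffer with finitely many states, but it is not the behavior of any deterministic splitter. -/
import Mathlib


/-- Words over the alphabet `A`, i.e. elements of the free monoid `A*`. -/
abbrev Word (A : Type) := List A

/-- The generating set `G = {(a,ε,a) : a ∈ A} ∪ {(ε,a,a) : a ∈ A}` of the
Shuffling Monoid. -/
def genG (A : Type) : Set (Word A × Word A × Word A) :=
  {g | ∃ a : A, g = ([a], [], [a]) ∨ g = ([], [a], [a])}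

/-- Componentwise product (concatenation) of a list of triples of words. -/
def prodTriple {A : Type} (ls : List (Word A × Word A × Word A)) :
    Word A × Word A × Word A :=
  ((ls.map fun l => l.1).flatten, (ls.map fun l => l.2.1).flatten,
    (ls.map fun l => l.2.2).flatten)

/-- The Shuffling Monoid `U`: the submonoid of `A* × A* × A*` generated by `G`,
described as the set of all products of finite sequences of generators. -/
def shuffleU (A : Type) : Set (Word A × Word A × Word A) :=
  {m | ∃ ls : List (Word A × Word A × Word A), (∀ l ∈ ls, l ∈ genG A) ∧ prodTriple ls = m}

/-- A spliffer (equivalently, splitter) over `A`: a finite automaton whose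
transitions are labeled by elements of `G`. -/
structure Spliffer (A : Type) where
  Q : Type
  finQ : Finite Q
  E : Q → (Word A × Word A × Word A) → Q → Prop
  I : Set Q
  T : Set Q
  labels_mem : ∀ {q l q'}, E q l q' → l ∈ genG A

/-- Paths in a spliffer, recording the sequence of labels. -/
inductive Spliffer.Path {A : Type} (S : Spliffer A) :
    S.Q → List (Word A × Word A × Word A) → S.Q → Prop
  | nil (q : S.Q) : Spliffer.Path S q [] q
  | cons {q q' q'' : S.Q} {l : Word A × Word A × Word A}
      {ls : List (Word A × Word A × Word A)} :
      S.E q l q' → Spliffer.Path S q' ls q'' → Spliffer.Path S q (l :: ls) q''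

/-- The behavior `|S|` of a spliffer: products of the label sequences of all
successful runs. -/
def Spliffer.behavior {A : Type} (S : Spliffer A) : Set (Word A × Word A × Word A) :=
  {m | ∃ q ∈ S.I, ∃ q' ∈ S.T, ∃ ls, S.Path q ls q' ∧ prodTriple ls = m}

/-- A splitter is deterministic if it has a single initial state, for every state
and input letter there is at most one outgoing transition reading that letter,
and all transitions leaving a given state write to the same tape. -/
def Spliffer.Deterministic {A : Type} (S : Spliffer A) : Prop :=
  (∃! i, i ∈ S.I) ∧
  (∀ ⦃q l₁ q₁ l₂ q₂⦄, S.E q l₁ q₁ → S.E q l₂ q₂ → l₁.2.2 = l₂.2.2 → l₁ = l₂ ∧ q₁ = q₂) ∧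
  (∀ ⦃q l₁ q₁ l₂ q₂⦄, S.E q l₁ q₁ → S.E q l₂ q₂ →
    (l₁.1 = [] ∧ l₂.1 = []) ∨ (l₁.2.1 = [] ∧ l₂.2.1 = []))

lemma prodTriple_cons {A : Type} (l : Word A × Word A × Word A)
    (ls : List (Word A × Word A × Word A)) :
    prodTriple (l :: ls) =
      (l.1 ++ (prodTriple ls).1, l.2.1 ++ (prodTriple ls).2.1,
        l.2.2 ++ (prodTriple ls).2.2) := by
  simp [prodTriple]

def dratE {A : Type} (a b : A) :
    Fin 4 → (Word A × Word A × Word A) → Fin 4 → Prop :=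
  fun q l q' =>
    (q = 0 ∧ q' = 1 ∧ (l = ([a],[],[a]) ∨ l = ([],[a],[a]))) ∨
    (q = 1 ∧ q' = 2 ∧ l = ([],[b],[b])) ∨
    (q = 2 ∧ q' = 3 ∧ l = ([a],[],[a]))

def dratS {A : Type} (a b : A) : Spliffer A where
  Q := Fin 4
  finQ := inferInstance
  E := dratE a b
  I := {0}
  T := {3}
  labels_mem := by
    intro q l q' h
    rcases h with ⟨_,_,h|h⟩|⟨_,_,h⟩|⟨_,_,h⟩
    exacts [⟨a, Or.inl h⟩, ⟨a, Or.inr h⟩, ⟨b, Or.inr h⟩, ⟨a, Or.inl h⟩]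

lemma dratS_pathInv {A : Type} (a b : A) :
    ∀ {q ls q'}, (dratS a b).Path q ls q' → q' = (3 : Fin 4) →
      (q = (3 : Fin 4) ∧ ls = []) ∨
      (q = (2 : Fin 4) ∧ ls = [([a],[],[a])]) ∨
      (q = (1 : Fin 4) ∧ ls = [([],[b],[b]), ([a],[],[a])]) ∨
      (q = (0 : Fin 4) ∧
        (ls = [([a],[],[a]), ([],[b],[b]), ([a],[],[a])] ∨
         ls = [([],[a],[a]), ([],[b],[b]), ([a],[],[a])])) := by
  intro q ls q' h
  induction h with
  | nil q => intro hq; exact Or.inl ⟨hq, rfl⟩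
  | @cons q q' q'' l ls hE hp ih =>
      intro hq'
      have ih' := ih hq'
      replace hE : dratE a b q l q' := hE
      rcases hE with ⟨rfl, rfl, hl⟩ | ⟨rfl, rfl, rfl⟩ | ⟨rfl, rfl, rfl⟩
      · -- q = 0, intermediate state 1
        rcases ih' with ⟨h3, _⟩ | ⟨h3, _⟩ | ⟨_, rfl⟩ | ⟨h3, _⟩
        · exact absurd h3 (show (1 : Fin 4) ≠ 3 by decide)
        · exact absurd h3 (show (1 : Fin 4) ≠ 2 by decide)
        · refine Or.inr (Or.inr (Or.inr ⟨rfl, ?_⟩))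
          rcases hl with rfl | rfl
          · exact Or.inl rfl
          · exact Or.inr rfl
        · exact absurd h3 (show (1 : Fin 4) ≠ 0 by decide)
      · -- q = 1, intermediate state 2
        rcases ih' with ⟨h3, _⟩ | ⟨_, rfl⟩ | ⟨h3, _⟩ | ⟨h3, _⟩
        · exact absurd h3 (show (2 : Fin 4) ≠ 3 by decide)
        · exact Or.inr (Or.inr (Or.inl ⟨rfl, rfl⟩))
        · exact absurd h3 (show (2 : Fin 4) ≠ 1 by decide)
        · exact absurd h3 (show (2 : Fin 4) ≠ 0 by decide)
      · -- q = 2, intermediate state 3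
        rcases ih' with ⟨_, rfl⟩ | ⟨h3, _⟩ | ⟨h3, _⟩ | ⟨h3, _⟩
        · exact Or.inr (Or.inl ⟨rfl, rfl⟩)
        · exact absurd h3 (show (3 : Fin 4) ≠ 2 by decide)
        · exact absurd h3 (show (3 : Fin 4) ≠ 1 by decide)
        · exact absurd h3 (show (3 : Fin 4) ≠ 0 by decide)

/-- over `A = {a,b}`, the set `{(aa,b,aba), (a,ab,aba)}` is the
behavior of some spliffer, but not of any deterministic splitter; hence the
family of behaviors of deterministic splitters is a proper subfamily of the
family of behaviors of spliffers. -/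
theorem drat_proper_subfamily_of_rat {A : Type} (a b : A) (hab : a ≠ b)
    (hA : ∀ x : A, x = a ∨ x = b) :
    (∃ S : Spliffer A, S.behavior =
        ({([a, a], [b], [a, b, a]), ([a], [a, b], [a, b, a])} :
          Set (Word A × Word A × Word A))) ∧
    ¬ ∃ S : Spliffer A, S.Deterministic ∧ S.behavior =
        ({([a, a], [b], [a, b, a]), ([a], [a, b], [a, b, a])} :
          Set (Word A × Word A × Word A)) := by
  constructor
  · refine ⟨dratS a b, ?_⟩
    ext m
    simp only [Set.mem_insert_iff, Set.mem_singleton_iff]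
    constructor
    · rintro ⟨q, hqI, q', hq'T, ls, hp, rfl⟩
      have hq : q = (0 : Fin 4) := hqI
      have hq' : q' = (3 : Fin 4) := hq'T
      rcases dratS_pathInv a b hp hq' with ⟨h3, _⟩ | ⟨h3, _⟩ | ⟨h3, _⟩ | ⟨_, rfl | rfl⟩
      · exact absurd (hq ▸ h3) (show (0 : Fin 4) ≠ 3 by decide)
      · exact absurd (hq ▸ h3) (show (0 : Fin 4) ≠ 2 by decide)
      · exact absurd (hq ▸ h3) (show (0 : Fin 4) ≠ 1 by decide)
      · left; rfl
      · right; rfl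
    · have hb : (dratS a b).E (1 : Fin 4) ([],[b],[b]) (2 : Fin 4) := Or.inr (Or.inl ⟨rfl, rfl, rfl⟩)
      have ha2 : (dratS a b).E (2 : Fin 4) ([a],[],[a]) (3 : Fin 4) := Or.inr (Or.inr ⟨rfl, rfl, rfl⟩)
      rintro (rfl | rfl)
      · refine ⟨(0 : Fin 4), rfl, (3 : Fin 4), rfl, [([a],[],[a]), ([],[b],[b]), ([a],[],[a])], ?_, rfl⟩
        exact Spliffer.Path.cons (Or.inl ⟨rfl, rfl, Or.inl rfl⟩)
          (Spliffer.Path.cons hb (Spliffer.Path.cons ha2 (Spliffer.Path.nil (S := dratS a b) (3 : Fin 4))))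
      · refine ⟨(0 : Fin 4), rfl, (3 : Fin 4), rfl, [([],[a],[a]), ([],[b],[b]), ([a],[],[a])], ?_, rfl⟩
        exact Spliffer.Path.cons (Or.inl ⟨rfl, rfl, Or.inr rfl⟩)
          (Spliffer.Path.cons hb (Spliffer.Path.cons ha2 (Spliffer.Path.nil (S := dratS a b) (3 : Fin 4))))
  · rintro ⟨S, hdet, hbeh⟩
    obtain ⟨i, hiI, hiuniq⟩ := hdet.1
    have h1 : ([a, a], [b], [a, b, a]) ∈ S.behavior := by rw [hbeh]; exact Or.inl rfl
    have h2 : ([a], [a, b], [a, b, a]) ∈ S.behavior := by rw [hbeh]; exact Or.inr rfl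
    obtain ⟨q1, hq1I, q1', _, ls1, hp1, he1⟩ := h1
    obtain ⟨q2, hq2I, q2', _, ls2, hp2, he2⟩ := h2
    have hq1 : q1 = i := hiuniq q1 hq1I
    have hq2 : q2 = i := hiuniq q2 hq2I
    subst hq1; subst hq2
    cases hp1 with
    | nil => simp [prodTriple] at he1
    | @cons _ m1 _ l1 r1 hE1 hr1 =>
      cases hp2 with
      | nil => simp [prodTriple] at he2
      | @cons _ m2 _ l2 r2 hE2 hr2 =>
        rw [prodTriple_cons] at he1 he2
        have he11 : l1.1 ++ (prodTriple r1).1 = [a, a] := congrArg (fun p => p.1) he1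
        have he12 : l1.2.1 ++ (prodTriple r1).2.1 = [b] := congrArg (fun p => p.2.1) he1
        have he13 : l1.2.2 ++ (prodTriple r1).2.2 = [a, b, a] :=
          congrArg (fun p => p.2.2) he1
        have he21 : l2.1 ++ (prodTriple r2).1 = [a] := congrArg (fun p => p.1) he2
        have he22 : l2.2.1 ++ (prodTriple r2).2.1 = [a, b] := congrArg (fun p => p.2.1) he2
        have he23 : l2.2.2 ++ (prodTriple r2).2.2 = [a, b, a] :=
          congrArg (fun p => p.2.2) he2
        -- the first label of run 1 must be ([a],[],[a])
        obtain ⟨x, hx | hx⟩ := S.labels_mem hE1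
        case inr =>
          rw [hx] at he12 he13
          simp only [List.singleton_append] at he12 he13
          injection he12 with hxb _
          injection he13 with hxa _
          exact hab (hxa.symm.trans hxb)
        rw [hx] at he13
        simp only [List.singleton_append] at he13
        injection he13 with hxa _
        rw [hxa] at hx
        subst hx
        -- the first label of run 2 has third coordinate [a]
        obtain ⟨y, hy | hy⟩ := S.labels_mem hE2
        case inr =>
          -- l2 = ([],[y],[y]); determinism would force l2 = ([a],[],[a])
          rw [hy] at he23
          simp only [List.singleton_append] at he23
          injection he23 with hya _
          rw [hya] at hy
          subst hy
          have hll := (hdet.2.1 hE1 hE2 rfl).1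
          simp at hll
        -- l2 = ([y],[],[y]) with y = a; analyze the rest of run 2
        rw [hy] at he21 he22 he23
        simp only [List.singleton_append, List.nil_append] at he21 he22 he23
        injection he21 with hya h21'
        injection he23 with _ h23'
        cases hr2 with
        | nil => simp [prodTriple] at h23'
        | @cons _ m2' _ l2' r2' hE2' hr2' =>
          simp only [prodTriple_cons] at h21' he22 h23'
          obtain ⟨z, hz | hz⟩ := S.labels_mem hE2'
          · rw [hz] at h21'
            simp at h21'
          · rw [hz] at he22 h23'
            simp only [List.singleton_append] at he22 h23'
            injection he22 with hza _
            injection h23' with hzb _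
            exact hab (hza.symm.trans hzb)
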